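/- Explicit value of V in the unconstrained regime: with a_i, s_i, μ and V as defined, let (x,t) satisfy A_{i−1} ≤ t < A_i and x + ((s_i−1)/s_i)(A_i − t) + ∑_{j=i+1}^σ a_j (s_j−1)/s_j ≤ μ/2. Then V(x,t) = (A_i − t) log s_i + ∑_{j=i+1}^σ a_j log s_j. -/

import Mathlib

/-!
The objective of `V` separates over the blocks, and the block-`j` term
`θ log(s_j - 1) + H(θ)` is the `s_j`-ary entropy of `θ`, which on `[0, 1]` is maximised at
`θ = (s_j - 1)/s_j` with maximum `log s_j`. So the sum of the block maxima bounds the objective,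
and it is attained as soon as the blockwise maximisers satisfy the constraint.
-/

open Finset

/-- The entropy function `H(θ) = -θ log θ - (1-θ) log(1-θ)`, with
`H 0 = H 1 = 0` by Mathlib's convention `Real.log 0 = 0`. -/
noncomputable def Hent (θ : ℝ) : ℝ := -θ * Real.log θ - (1 - θ) * Real.log (1 - θ)

/-- `A_{i-1} = a_1 + ⋯ + a_{i-1}`, the left endpoint of block `i`. -/
noncomputable def Apre {σ : ℕ} (a : Fin σ → ℝ) (i : Fin σ) : ℝ :=
  ∑ k ∈ Finset.univ.filter (fun k => k < i), a k

lemma sub_one_div_self_mem_Icc {q : ℝ} (hq : 1 ≤ q) : (q - 1) / q ∈ Set.Icc 0 1 :=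
  ⟨div_nonneg (by linarith) (by linarith), div_le_one_of_le₀ (by linarith) (by linarith)⟩

namespace Real

lemma qaryEntropy_sub_one_div_self (q : ℕ) : qaryEntropy q ((q - 1) / q) = log q := by
  rcases Nat.lt_or_ge q 2 with hq | hq
  · interval_cases q <;> simp
  have hq' : (2 : ℝ) ≤ q := by exact_mod_cast hq
  have hcompl : (1 : ℝ) - (q - 1) / q = (q : ℝ)⁻¹ := by field_simp; ring
  rw [qaryEntropy, binEntropy, hcompl, inv_inv, inv_div, log_div (by positivity) (by linarith)]
  push_cast
  field_simp
  ring

lemma qaryEntropy_le_log {q : ℕ} (hq : 2 ≤ q) {p : ℝ} (hp : p ∈ Set.Icc 0 1) :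
    qaryEntropy q p ≤ log q := by
  have hq' : (1 : ℝ) ≤ q := by exact_mod_cast hq.trans' one_le_two
  have hmax : ((q : ℝ) - 1) / q = 1 - 1 / q := by field_simp
  have hmem : (1 - 1 / q : ℝ) ∈ Set.Icc 0 1 := hmax ▸ sub_one_div_self_mem_Icc hq'
  rw [← qaryEntropy_sub_one_div_self, hmax]
  rcases le_total p (1 - 1 / q) with hle | hle
  · exact (qaryEntropy_strictMonoOn hq).monotoneOn ⟨hp.1, hle⟩ ⟨hmem.1, le_rfl⟩ hle
  · exact (qaryEntropy_strictAntiOn hq).antitoneOn ⟨le_rfl, hmem.2⟩ ⟨hle, hp.2⟩ hle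

end Real

lemma Hent_eq_binEntropy : Hent = Real.binEntropy := by
  ext θ
  simp only [Hent, Real.binEntropy, Real.log_inv]
  ring

lemma mul_log_sub_one_add_Hent_eq_qaryEntropy (q : ℕ) (θ : ℝ) :
    θ * Real.log ((q : ℝ) - 1) + Hent θ = Real.qaryEntropy q θ := by
  simp [Real.qaryEntropy, Hent_eq_binEntropy]

theorem limit_value_function_unconstrained_general
    (σ : ℕ) (s : Fin σ → ℕ) (hs : ∀ i, 2 ≤ s i)
    (a : Fin σ → ℝ) (ha : ∀ i, 0 < a i)
    (μ : ℝ)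
    (V : ℝ → ℝ → ℝ)
    (hV : ∀ (i : Fin σ) (x t : ℝ), x ∈ Set.Icc 0 (μ / 2) →
      Apre a i ≤ t → t < Apre a i + a i →
      V x t = sSup {v : ℝ | ∃ θ : Fin σ → ℝ,
        (∀ j, θ j ∈ Set.Icc (0 : ℝ) 1) ∧
        x + θ i * (Apre a i + a i - t)
          + (∑ j ∈ univ.filter (fun j => i < j), a j * θ j) ≤ μ / 2 ∧
        v = (Apre a i + a i - t) *
              (θ i * Real.log ((s i : ℝ) - 1) + Hent (θ i)) +
            ∑ j ∈ univ.filter (fun j => i < j),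
              a j * (θ j * Real.log ((s j : ℝ) - 1) + Hent (θ j))})
    (i : Fin σ) (x t : ℝ)
    (hx : 0 ≤ x)
    (hti : Apre a i ≤ t ∧ t < Apre a i + a i)
    (hcon : x + (((s i : ℝ) - 1) / (s i : ℝ)) * (Apre a i + a i - t)
        + (∑ j ∈ univ.filter (fun j => i < j),
            a j * (((s j : ℝ) - 1) / (s j : ℝ))) ≤ μ / 2) :
    V x t = (Apre a i + a i - t) * Real.log (s i : ℝ) +
      ∑ j ∈ univ.filter (fun j => i < j), a j * Real.log (s j : ℝ) := by
  obtain ⟨hAt, htA⟩ := hti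
  have hrest : 0 ≤ Apre a i + a i - t := by linarith
  have hmax : ∀ j, ((s j : ℝ) - 1) / s j ∈ Set.Icc (0 : ℝ) 1 := fun j =>
    sub_one_div_self_mem_Icc (by exact_mod_cast (hs j).trans' one_le_two)
  have hxμ : x ≤ μ / 2 := by
    have := mul_nonneg (hmax i).1 hrest
    have := sum_nonneg fun j (_ : j ∈ univ.filter (i < ·)) => mul_nonneg (ha j).le (hmax j).1
    linarith
  rw [hV i x t ⟨hx, hxμ⟩ hAt htA]
  refine IsGreatest.csSup_eq ⟨⟨fun j => ((s j : ℝ) - 1) / s j, hmax, hcon, ?_⟩, ?_⟩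
  · simp only [mul_log_sub_one_add_Hent_eq_qaryEntropy, Real.qaryEntropy_sub_one_div_self]
  · rintro v ⟨θ, hθ, -, rfl⟩
    simp only [mul_log_sub_one_add_Hent_eq_qaryEntropy]
    gcongr with j
    · exact Real.qaryEntropy_le_log (hs i) (hθ i)
    · exact (ha j).le
    · exact Real.qaryEntropy_le_log (hs j) (hθ j)

/-- explicit value of the limit value function `V` in the
unconstrained regime: if the unconstrained maximizers `θ_j* = (s_j-1)/s_j`
satisfy the constraint, then
`V(x,t) = (A_i - t) log s_i + ∑_{j>i} a_j log s_j`. -/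
theorem limit_value_function_unconstrained
    (σ : ℕ) (hσ : 1 ≤ σ) (s : Fin σ → ℕ) (hs : ∀ i, 2 ≤ s i)
    (a : Fin σ → ℝ) (ha : ∀ i, 0 < a i) (hsum : ∑ i, a i = 1)
    (μ : ℝ) (hμ : μ ∈ Set.Ioo (0 : ℝ) 1)
    (V : ℝ → ℝ → ℝ)
    (hV : ∀ (i : Fin σ) (x t : ℝ), x ∈ Set.Icc 0 (μ / 2) →
      Apre a i ≤ t → t < Apre a i + a i →
      V x t = sSup {v : ℝ | ∃ θ : Fin σ → ℝ,
        (∀ j, θ j ∈ Set.Icc (0 : ℝ) 1) ∧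
        x + θ i * (Apre a i + a i - t)
          + (∑ j ∈ univ.filter (fun j => i < j), a j * θ j) ≤ μ / 2 ∧
        v = (Apre a i + a i - t) *
              (θ i * Real.log ((s i : ℝ) - 1) + Hent (θ i)) +
            ∑ j ∈ univ.filter (fun j => i < j),
              a j * (θ j * Real.log ((s j : ℝ) - 1) + Hent (θ j))})
    (i : Fin σ) (x t : ℝ)
    (hx : 0 ≤ x)
    (hti : Apre a i ≤ t ∧ t < Apre a i + a i)
    (hcon : x + (((s i : ℝ) - 1) / (s i : ℝ)) * (Apre a i + a i - t)
        + (∑ j ∈ univ.filter (fun j => i < j),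
            a j * (((s j : ℝ) - 1) / (s j : ℝ))) ≤ μ / 2) :
    V x t = (Apre a i + a i - t) * Real.log (s i : ℝ) +
      ∑ j ∈ univ.filter (fun j => i < j), a j * Real.log (s j : ℝ) :=
  limit_value_function_unconstrained_general σ s hs a ha μ V hV i x t hx hti hcon
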